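/- arXiv:1802.07849 — 2 statements merged into one kernel-verified Lean document; each statement's English description precedes it below -/
import Mathlib

section
/- In a reduced formal context (G,M,I), for distinct attributes a, b the following are equivalent: (1) a ~ b; (2) for every object g ∈ G there exists an object h ∈ G with φ_{a,b}(g') = h'. -/
open Set

def extentOf {α β : Type*} (I : α → β → Prop) (B : Set β) : Set α :=
  {g | ∀ m ∈ B, I g m}

def intentOf {α β : Type*} (I : α → β → Prop) (A : Set α) : Set β :=
  {m | ∀ g ∈ A, I g m}

def IsIntent {α β : Type*} (I : α → β → Prop) (X : Set β) : Prop :=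
  intentOf I (extentOf I X) = X

open scoped Classical in
noncomputable def phi {β : Type*} (a b : β) (X : Set β) : Set β :=
  if a ∈ X ∧ b ∉ X then X \ {a} ∪ {b}
  else if b ∈ X ∧ a ∉ X then X \ {b} ∪ {a}
  else X

def Clone {α β : Type*} (I : α → β → Prop) (a b : β) : Prop :=
  ∀ X : Set β, IsIntent I X → IsIntent I (phi a b X)

def objDer {α β : Type*} (I : α → β → Prop) (g : α) : Set β := {m | I g m}

lemma phi_ab {β : Type*} {a b : β} {X : Set β} (ha : a ∈ X) (hb : b ∉ X) :
    phi a b X = X \ {a} ∪ {b} := by simp [phi, ha, hb]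

lemma phi_ba {β : Type*} {a b : β} {X : Set β} (hb : b ∈ X) (ha : a ∉ X) :
    phi a b X = X \ {b} ∪ {a} := by
  have : ¬ (a ∈ X ∧ b ∉ X) := by tauto
  simp [phi, this, hb, ha]

lemma phi_id {β : Type*} {a b : β} {X : Set β} (h : a ∈ X ↔ b ∈ X) :
    phi a b X = X := by
  unfold phi
  split_ifs <;> tauto

lemma phi_mem_of {β : Type*} {a b x : β} {Y : Set β} (hx : x ∈ Y)
    (hxa : x ≠ a) (hxb : x ≠ b) : x ∈ phi a b Y := by
  unfold phi
  split_ifs <;> (try simp only [mem_union, mem_diff, mem_singleton_iff]) <;> tauto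

lemma phi_mono {β : Type*} (a b : β) {X Y : Set β} (hXY : X ⊆ Y) :
    phi a b X ⊆ phi a b Y := by
  by_cases ha : a ∈ X <;> by_cases hb : b ∈ X
  · rw [phi_id (X := X) (by tauto)]
    rw [phi_id (X := Y) (by constructor <;> intro <;> [exact hXY hb; exact hXY ha])]
    exact hXY
  · rw [phi_ab ha hb]
    by_cases hbY : b ∈ Y
    · rw [phi_id (X := Y) (by constructor <;> intro <;> [exact hbY; exact hXY ha])]
      rintro x (⟨h, -⟩ | h)
      · exact hXY h
      · rwa [mem_singleton_iff.mp h]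
    · rw [phi_ab (hXY ha) hbY]
      rintro x (⟨h, h2⟩ | h)
      · exact Or.inl ⟨hXY h, h2⟩
      · exact Or.inr h
  · rw [phi_ba hb ha]
    by_cases haY : a ∈ Y
    · rw [phi_id (X := Y) (by constructor <;> intro <;> [exact hXY hb; exact haY])]
      rintro x (⟨h, -⟩ | h)
      · exact hXY h
      · rwa [mem_singleton_iff.mp h]
    · rw [phi_ba (hXY hb) haY]
      rintro x (⟨h, h2⟩ | h)
      · exact Or.inl ⟨hXY h, h2⟩
      · exact Or.inr h
  · rw [phi_id (X := X) (by tauto)]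
    intro x hx
    exact phi_mem_of (hXY hx) (fun h => ha (h ▸ hx)) (fun h => hb (h ▸ hx))

lemma phi_phi {β : Type*} {a b : β} (hne : a ≠ b) (X : Set β) :
    phi a b (phi a b X) = X := by
  by_cases ha : a ∈ X <;> by_cases hb : b ∈ X
  · rw [phi_id (X := X) (by tauto), phi_id (by tauto)]
  · rw [phi_ab ha hb]
    have h1 : b ∈ X \ {a} ∪ {b} := by simp
    have h2 : a ∉ X \ {a} ∪ {b} := by simp [hne]
    rw [phi_ba h1 h2]
    ext x
    simp only [mem_union, mem_diff, mem_singleton_iff]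
    by_cases hxa : x = a <;> by_cases hxb : x = b <;> subst_vars <;> tauto
  · rw [phi_ba hb ha]
    have h1 : a ∈ X \ {b} ∪ {a} := by simp
    have h2 : b ∉ X \ {b} ∪ {a} := by simp [Ne.symm hne]
    rw [phi_ab h1 h2]
    ext x
    simp only [mem_union, mem_diff, mem_singleton_iff]
    by_cases hxa : x = a <;> by_cases hxb : x = b <;> subst_vars <;> tauto
  · rw [phi_id (X := X) (by tauto), phi_id (by tauto)]

lemma phi_biInter {β ι : Type*} {a b : β} (hne : a ≠ b) (S : Set ι) (f : ι → Set β) :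
    phi a b (⋂ i ∈ S, f i) = ⋂ i ∈ S, phi a b (f i) := by
  apply Subset.antisymm
  · exact subset_iInter₂ fun i hi => phi_mono a b (biInter_subset_of_mem hi)
  · have h1 : phi a b (⋂ i ∈ S, phi a b (f i)) ⊆ ⋂ i ∈ S, f i := by
      refine subset_iInter₂ fun i hi => ?_
      have := phi_mono a b (biInter_subset_of_mem (t := fun i => phi a b (f i)) hi)
      rwa [phi_phi hne] at this
    have := phi_mono a b h1
    rwa [phi_phi hne] at this

lemma subset_ie {α β : Type*} (I : α → β → Prop) (X : Set β) :
    X ⊆ intentOf I (extentOf I X) :=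
  fun m hm g hg => hg m hm

lemma intent_antitone {α β : Type*} (I : α → β → Prop) {A B : Set α} (h : A ⊆ B) :
    intentOf I B ⊆ intentOf I A :=
  fun m hm g hg => hm g (h hg)

lemma isIntent_intentOf {α β : Type*} (I : α → β → Prop) (A : Set α) :
    IsIntent I (intentOf I A) := by
  apply Subset.antisymm
  · exact intent_antitone I (fun g hg m hm => hm g hg)
  · exact subset_ie I _

lemma intentOf_eq_biInter {α β : Type*} (I : α → β → Prop) (A : Set α) :
    intentOf I A = ⋂ g ∈ A, objDer I g := by
  ext m; simp [intentOf, objDer]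

lemma isIntent_objDer {α β : Type*} (I : α → β → Prop) (g : α) :
    IsIntent I (objDer I g) := by
  apply Subset.antisymm
  · intro m hm
    exact hm g (fun n hn => hn)
  · exact subset_ie I _

/-- In a reduced formal context, for distinct attributes a, b:
a ~ b iff for every object g there is an object h with φ_{a,b}(g') = h'. -/
theorem clone_iff_object_rows {α β : Type*} (I : α → β → Prop)
    (hObjClar : ∀ g h : α, g ≠ h → objDer I g ≠ objDer I h)
    (hAttrClar : ∀ m n : β, m ≠ n → extentOf I {m} ≠ extentOf I {n})
    (hObjRed : ∀ g : α, ¬ ∃ S : Set α, g ∉ S ∧ (⋂ h ∈ S, objDer I h) = objDer I g)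
    (hAttrRed : ∀ m : β, ¬ ∃ N : Set β, m ∉ N ∧ (⋂ n ∈ N, extentOf I {n}) = extentOf I {m})
    (a b : β) (hne : a ≠ b) :
    Clone I a b ↔ ∀ g : α, ∃ h : α, phi a b (objDer I g) = objDer I h := by
  constructor
  · intro hC g
    have hX : IsIntent I (phi a b (objDer I g)) := hC _ (isIntent_objDer I g)
    set X := phi a b (objDer I g) with hXdef
    set H := extentOf I X with hHdef
    have hXeq : X = ⋂ h ∈ H, objDer I h := by
      rw [← intentOf_eq_biInter]; exact hX.symm
    have hgup : objDer I g = ⋂ h ∈ H, phi a b (objDer I h) := by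
      have h0 : phi a b X = objDer I g := phi_phi hne _
      rw [← h0, hXeq, phi_biInter hne]
    set S : Set α := {k | ∃ h ∈ H, k ∈ extentOf I (phi a b (objDer I h))} with hSdef
    have hgS : objDer I g = ⋂ k ∈ S, objDer I k := by
      apply Subset.antisymm
      · refine subset_iInter₂ fun k hk => ?_
        obtain ⟨h, hh, hk2⟩ := hk
        have h1 : phi a b (objDer I h) ⊆ objDer I k := fun m hm => hk2 m hm
        have h2 : objDer I g ⊆ phi a b (objDer I h) := by
          rw [hgup]; exact biInter_subset_of_mem hh
        exact h2.trans h1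
      · rw [hgup]
        refine subset_iInter₂ fun h hh => ?_
        have hint : IsIntent I (phi a b (objDer I h)) := hC _ (isIntent_objDer I h)
        have heq : phi a b (objDer I h)
            = ⋂ k ∈ extentOf I (phi a b (objDer I h)), objDer I k := by
          rw [← intentOf_eq_biInter]; exact hint.symm
        rw [heq]
        refine subset_iInter₂ fun k hk => ?_
        exact biInter_subset_of_mem ⟨h, hh, hk⟩
    have hgmem : g ∈ S := by
      by_contra hgn
      exact hObjRed g ⟨S, hgn, hgS.symm⟩
    obtain ⟨h, hh, hk⟩ := hgmem
    have h1 : phi a b (objDer I h) ⊆ objDer I g := fun m hm => hk m hm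
    have h2 : objDer I g ⊆ phi a b (objDer I h) := by
      rw [hgup]; exact biInter_subset_of_mem hh
    have heq : objDer I g = phi a b (objDer I h) := Subset.antisymm h2 h1
    refine ⟨h, ?_⟩
    rw [hXdef, heq, phi_phi hne]
  · intro hR X hX
    choose k hk using hR
    have hXeq : X = ⋂ h ∈ extentOf I X, objDer I h := by
      rw [← intentOf_eq_biInter]; exact hX.symm
    have h1 : phi a b X = ⋂ h ∈ extentOf I X, objDer I (k h) := by
      conv_lhs => rw [hXeq]
      rw [phi_biInter hne]
      exact iInter₂_congr fun h _ => hk h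
    have h2 : (⋂ h ∈ extentOf I X, objDer I (k h))
        = intentOf I (k '' (extentOf I X)) := by
      rw [intentOf_eq_biInter, biInter_image]
    rw [h1, h2]
    exact isIntent_intentOf I _
end

section
/- In a reduced formal context, if condition (2) holds for attributes a, b (for every g ∈ G there is h ∈ G with φ_{a,b}(g') = h'), then for every intent N = H' of the context, φ_{a,b}(N) is again an intent. -/
open Set

lemma phi_comm {β : Type*} (a b : β) (X : Set β) : phi a b X = phi b a X := by
  unfold phi
  split_ifs <;> first | rfl | tauto

lemma phi_aux {α β : Type*} (I : α → β → Prop) (a b : β) (f : α → α)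
    (hf : ∀ g, phi a b (objDer I g) = objDer I (f g))
    (H : Set α) (hA : a ∈ intentOf I H) (hB : b ∉ intentOf I H) :
    phi a b (intentOf I H) = intentOf I (f '' H) := by
  classical
  have hphiN : phi a b (intentOf I H) = intentOf I H \ {a} ∪ {b} := by
    rw [phi, if_pos ⟨hA, hB⟩]
  rw [hphiN]
  ext m
  have hR : (m ∈ intentOf I (f '' H)) ↔ ∀ g ∈ H, m ∈ phi a b (objDer I g) := by
    simp only [intentOf, mem_setOf_eq, Set.forall_mem_image]
    exact forall₂_congr fun g _ => by rw [hf g]; rfl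
  rw [hR]
  have hBg : ∃ g ∈ H, ¬ I g b := by
    by_contra h
    push_neg at h
    exact hB h
  constructor
  · rintro (⟨hmN, hma⟩ | hmb) g hg
    · have hIgm : I g m := hmN g hg
      unfold phi
      split_ifs with h1 h2
      · exact Or.inl ⟨hIgm, hma⟩
      · exact absurd (hA g hg) h2.2
      · exact hIgm
    · simp only [mem_singleton_iff] at hmb
      rw [hmb]
      unfold phi
      split_ifs with h1 h2
      · exact Or.inr rfl
      · exact absurd (hA g hg) h2.2
      · push_neg at h1
        exact h1 (hA g hg)
      
  · intro hm
    by_cases hmb : m = b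
    · exact Or.inr hmb
    left
    obtain ⟨g₀, hg₀, hg₀b⟩ := hBg
    have ha0 : a ∈ objDer I g₀ := hA g₀ hg₀
    have hm0 := hm g₀ hg₀
    rw [phi, if_pos ⟨ha0, hg₀b⟩] at hm0
    rcases hm0 with ⟨_, hma⟩ | h
    · refine ⟨?_, hma⟩
      intro g hg
      have hmg := hm g hg
      unfold phi at hmg
      split_ifs at hmg with h1 h2
      · rcases hmg with ⟨h, _⟩ | h
        · exact h
        · exact absurd h hmb
      · exact absurd (hA g hg) h2.2
      · exact hmg
    · exact absurd h hmb

/-- In a reduced context, if for every object g there is h with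
φ_{a,b}(g') = h', then φ_{a,b} maps every intent H' to an intent. -/
theorem rows_to_intents {α β : Type*} (I : α → β → Prop)
    (hObjClar : ∀ g h : α, g ≠ h → objDer I g ≠ objDer I h)
    (hAttrClar : ∀ m n : β, m ≠ n → extentOf I {m} ≠ extentOf I {n})
    (hObjRed : ∀ g : α, ¬ ∃ S : Set α, g ∉ S ∧ (⋂ h ∈ S, objDer I h) = objDer I g)
    (hAttrRed : ∀ m : β, ¬ ∃ N : Set β, m ∉ N ∧ (⋂ n ∈ N, extentOf I {n}) = extentOf I {m})
    (a b : β)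
    (h2 : ∀ g : α, ∃ h : α, phi a b (objDer I g) = objDer I h) :
    ∀ H : Set α, ∃ H₂ : Set α, phi a b (intentOf I H) = intentOf I H₂ := by
  classical
  intro H
  choose f hf using h2
  by_cases h1 : a ∈ intentOf I H ∧ b ∉ intentOf I H
  · exact ⟨f '' H, phi_aux I a b f hf H h1.1 h1.2⟩
  by_cases h2' : b ∈ intentOf I H ∧ a ∉ intentOf I H
  · refine ⟨f '' H, ?_⟩
    rw [phi_comm]
    exact phi_aux I b a f (fun g => by rw [← phi_comm]; exact hf g) H h2'.1 h2'.2
  · refine ⟨H, ?_⟩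
    rw [phi, if_neg h1, if_neg h2']
end
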